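/- arXiv:1110.0812 — 5 statements merged into one kernel-verified Lean document; each statement's English description precedes it below -/
import Mathlib

section
/- Let $\nu \geq 2$ and let $2 \leq n, m \leq \nu$ be integers. Define the $(n+m-2) \times (m-1)$ matrix $A(\nu;n,m)$ whose $i$-th row (for $1 \leq i \leq m-1$) has entries $\nu-n+1, \nu-n+2, \ldots, \nu$ placed in consecutive columns $i, i+1, \ldots, i+n-1$ and zeros elsewhere, and form the square $(n+m-2) \times (n+m-2)$ matrix $X(\nu;n,m)$ by stacking $A(\nu;n,m)$ on top of $A(\nu;m,n)$. If one marks $n+m-2$ nonzero entries of $X(\nu;n,m)$ such that each row and each column contains exactly one marked entry, then the sum of the marked entries always equals $(\nu-n+1)(m-1) + \nu(n-1)$, independently of the choice of marking. -/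
/-!
On a nonzero entry of `X(ν;n,m)` in row `i` and column `j`, the value is `c i + j - i`, where
`c i = ν-n+1` on the `m-1` rows of the top block and `c i = ν` on the `n-1` rows of the bottom
block. Along a marking `σ` the terms `σ i` and `i` run over the same set of indices and
cancel, so the sum is `∑ c i = (ν-n+1)(m-1) + ν(n-1)` whatever `σ` is.
-/

/-- The matrix `X(ν;n,m)` obtained by stacking `A(ν;n,m)` on top of `A(ν;m,n)`:
the first `m-1` rows are shifted copies of `(ν-n+1, …, ν)`, the remaining `n-1`
rows are shifted copies of `(ν-m+1, …, ν)`. -/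
def Xmat (ν n m : ℕ) : Matrix (Fin (n + m - 2)) (Fin (n + m - 2)) ℤ := fun i j =>
  if (i : ℕ) < m - 1 then
    (if (i : ℕ) ≤ (j : ℕ) ∧ (j : ℕ) ≤ (i : ℕ) + (n - 1) then
      (ν : ℤ) - (n : ℤ) + 1 + (((j : ℕ) - (i : ℕ) : ℕ) : ℤ) else 0)
  else
    (if (i : ℕ) - (m - 1) ≤ (j : ℕ) ∧ (j : ℕ) ≤ (i : ℕ) - (m - 1) + (m - 1) then
      (ν : ℤ) - (m : ℤ) + 1 + (((j : ℕ) - ((i : ℕ) - (m - 1)) : ℕ) : ℤ) else 0)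

open Finset

theorem Equiv.Perm.sum_add_apply_sub {ι R : Type*} [Fintype ι] [AddCommGroup R]
    (σ : Equiv.Perm ι) (c f : ι → R) : ∑ i, (c i + f (σ i) - f i) = ∑ i, c i := by
  simp only [sum_sub_distrib, sum_add_distrib, Equiv.sum_comp σ f, add_sub_cancel_right]

theorem Fin.sum_ite_val_lt {R : Type*} [AddCommMonoid R] {N k : ℕ} (hk : k ≤ N) (a b : R) :
    ∑ i : Fin N, (if (i : ℕ) < k then a else b) = k • a + (N - k) • b := by
  rw [sum_ite, Finset.sum_const, Finset.sum_const, filter_not,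
    card_sdiff_of_subset (filter_subset _ _), Fin.card_filter_val_lt, card_univ, Fintype.card_fin, min_eq_right hk]

theorem Xmat_eq_of_ne_zero {ν n m : ℕ} (hm : 1 ≤ m) {i j : Fin (n + m - 2)}
    (h : Xmat ν n m i j ≠ 0) :
    Xmat ν n m i j = (if (i : ℕ) < m - 1 then (ν : ℤ) - n + 1 else ν) + (j : ℕ) - (i : ℕ) := by
  unfold Xmat at h ⊢
  split_ifs at h ⊢ with hi hband hband
  · rw [Nat.cast_sub hband.1]; ring
  · exact (h rfl).elim
  · rw [Nat.cast_sub hband.1, Nat.cast_sub (by omega : m - 1 ≤ (i : ℕ)), Nat.cast_sub hm]; ring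
  · exact (h rfl).elim

theorem stmt_3_general (ν n m : ℕ) (hn2 : 2 ≤ n)
    (hm2 : 2 ≤ m)
    (σ : Equiv.Perm (Fin (n + m - 2))) (hσ : ∀ i, Xmat ν n m i (σ i) ≠ 0) :
    ∑ i, Xmat ν n m i (σ i)
      = ((ν : ℤ) - (n : ℤ) + 1) * ((m : ℤ) - 1) + (ν : ℤ) * ((n : ℤ) - 1) := by
  rw [sum_congr rfl fun i _ => Xmat_eq_of_ne_zero (by omega) (hσ i),
    σ.sum_add_apply_sub _ fun j => ((j : ℕ) : ℤ), Fin.sum_ite_val_lt (by omega),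
    (by omega : n + m - 2 - (m - 1) = n - 1), nsmul_eq_mul, nsmul_eq_mul,
    Nat.cast_sub (by omega : 1 ≤ m), Nat.cast_sub (by omega : 1 ≤ n)]
  push_cast
  ring

/-- any marking of `X(ν;n,m)` by nonzero entries, one per row and per
column, has entry sum `(ν-n+1)(m-1) + ν(n-1)`. -/
theorem stmt_3 (ν n m : ℕ) (hν : 2 ≤ ν) (hn2 : 2 ≤ n) (hnν : n ≤ ν)
    (hm2 : 2 ≤ m) (hmν : m ≤ ν)
    (σ : Equiv.Perm (Fin (n + m - 2))) (hσ : ∀ i, Xmat ν n m i (σ i) ≠ 0) :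
    ∑ i, Xmat ν n m i (σ i)
      = ((ν : ℤ) - (n : ℤ) + 1) * ((m : ℤ) - 1) + (ν : ℤ) * ((n : ℤ) - 1) :=
  stmt_3_general ν n m hn2 hm2 σ hσ
end

section
/- Let $M \geq 1$ be a real number and let $2 \leq n, m \leq \nu$ be fixed integers. Let $P_1(Z) = \sum_{i=0}^{n-1} a_i Z^i$ and $P_2(Z) = \sum_{i=0}^{m-1} b_i Z^i$ be integer polynomials with $a_{n-1}, b_{m-1} \neq 0$ and $|a_i|, |b_i| < M^{\nu - i}$ for $0 \leq i \leq \nu - 1$. Then the resultant satisfies $|\mathrm{Res}(P_1, P_2)| \leq C(\nu) M^{\nu^2 - 1}$ for some constant $C(\nu)$ depending only on $\nu$. -/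
/-!
Under `|a_k|, |b_k| ≤ M ^ (ν - k)` the entry of the Sylvester matrix in row `i` and column `j` is
bounded by `M ^ (w i + j)`, where the weight `w i` depends only on the row. Dividing row `i` by
`M ^ w i` and column `j` by `M ^ j` leaves entries of absolute value at most `1`, so
`|Res| ≤ N! M ^ (∑ w i + ∑ j)` with `N = n + m - 2`. The exponent is
`N ν - (n - 1)(m - 1) = ν² - (ν - n + 1)(ν - m + 1) ≤ ν² - 1`.
-/

/-- The Sylvester matrix of `P₁ = ∑_{i<n} a i Z^i` (degree `n-1`) and
`P₂ = ∑_{i<m} b i Z^i` (degree `m-1`): `m-1` rows of shifted coefficients of `P₁`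
followed by `n-1` rows of shifted coefficients of `P₂`. -/
def sylvesterMat (n m : ℕ) (a b : ℕ → ℤ) :
    Matrix (Fin (n + m - 2)) (Fin (n + m - 2)) ℤ := fun i j =>
  if (i : ℕ) < m - 1 then
    (if (i : ℕ) ≤ (j : ℕ) ∧ (j : ℕ) ≤ (i : ℕ) + (n - 1) then
      a ((i : ℕ) + (n - 1) - (j : ℕ)) else 0)
  else
    (if (i : ℕ) - (m - 1) ≤ (j : ℕ) ∧ (j : ℕ) ≤ (i : ℕ) - (m - 1) + (m - 1) then
      b ((i : ℕ) - (m - 1) + (m - 1) - (j : ℕ)) else 0)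


open Finset Matrix
open scoped Nat

theorem prod_zpow_eq_zpow_sum₀ {ι G₀ : Type*} [CommGroupWithZero G₀] (s : Finset ι) {a : G₀}
    (ha : a ≠ 0) (f : ι → ℤ) : ∏ i ∈ s, a ^ f i = a ^ ∑ i ∈ s, f i := by
  classical
  induction s using Finset.induction_on with
  | empty => simp
  | insert i s hi ih => rw [prod_insert hi, sum_insert hi, ih, zpow_add₀ ha]

theorem abs_det_le_of_abs_le_zpow {ι : Type*} [Fintype ι] [DecidableEq ι] (A : Matrix ι ι ℝ)
    {M : ℝ} (hM : 0 < M) (ρ κ : ι → ℤ) (hA : ∀ i j, |A i j| ≤ M ^ (ρ i + κ j)) :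
    |A.det| ≤ (Fintype.card ι)! * M ^ (∑ i, ρ i + ∑ j, κ j) := by
  set B : Matrix ι ι ℝ := of fun i j => A i j / (M ^ ρ i * M ^ κ j)
  have hscale : A = of fun i j => M ^ ρ i * (of fun i j => M ^ κ j * B i j) i j := by
    ext i j
    simp only [B, of_apply]
    field_simp
  have hB : ∀ i j, |B i j| ≤ 1 := fun i j => by
    simp only [B, of_apply]
    rw [abs_div, ← zpow_add₀ hM.ne', abs_of_pos (zpow_pos hM _)]
    exact div_le_one_of_le₀ (hA i j) (zpow_pos hM _).le
  have hdetB : |B.det| ≤ (Fintype.card ι)! := by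
    simpa using det_le (abv := AbsoluteValue.abs) hB
  rw [hscale, det_mul_column, det_mul_row, prod_zpow_eq_zpow_sum₀ _ hM.ne',
    prod_zpow_eq_zpow_sum₀ _ hM.ne', zpow_add₀ hM.ne', abs_mul, abs_mul,
    abs_of_pos (by positivity : 0 < M ^ ∑ i, ρ i), abs_of_pos (by positivity : 0 < M ^ ∑ j, κ j)]
  calc M ^ (∑ i, ρ i) * (M ^ (∑ j, κ j) * |B.det|)
      ≤ M ^ (∑ i, ρ i) * (M ^ (∑ j, κ j) * (Fintype.card ι)!) := by gcongr
    _ = _ := by ring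

/-- `ν` minus the index of the coefficient standing at `(i, j)` in `sylvesterMat n m a b` is
`sylvesterRowWeight ν n m i + j`. -/
def sylvesterRowWeight (ν n m i : ℕ) : ℤ := ν - i - if i < m - 1 then ((n - 1 : ℕ) : ℤ) else 0

theorem abs_sylvesterMat_le {ν n m : ℕ} (hnν : n ≤ ν) (hmν : m ≤ ν) {M : ℝ} (hM : 0 ≤ M)
    {a b : ℕ → ℤ} (ha : ∀ i, i ≤ ν - 1 → (|a i| : ℝ) ≤ M ^ (ν - i))
    (hb : ∀ i, i ≤ ν - 1 → (|b i| : ℝ) ≤ M ^ (ν - i)) (i j : Fin (n + m - 2)) :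
    |(sylvesterMat n m a b i j : ℝ)| ≤ M ^ (sylvesterRowWeight ν n m i + j) := by
  have hpow : ∀ k, k ≤ ν - 1 → M ^ (ν - k) = M ^ ((ν : ℤ) - k) := fun k hk => by
    rw [← zpow_natCast, Nat.cast_sub (by omega)]
  unfold sylvesterMat sylvesterRowWeight
  split_ifs with hrow hband hband
  · have hk : (i : ℕ) + (n - 1) - j ≤ ν - 1 := by omega
    convert ha _ hk using 1
    rw [hpow _ hk]
    congr 1
    omega
  · simpa using zpow_nonneg hM _
  · have hk : (i : ℕ) - (m - 1) + (m - 1) - j ≤ ν - 1 := by omega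
    convert hb _ hk using 1
    rw [hpow _ hk]
    congr 1
    omega
  · simpa using zpow_nonneg hM _

theorem sum_sylvesterRowWeight_add {ν n m : ℕ} (hn : 1 ≤ n) :
    ∑ i : Fin (n + m - 2), (sylvesterRowWeight ν n m i + i)
      = ((n + m - 2 : ℕ) : ℤ) * ν - (m - 1 : ℕ) * (n - 1 : ℕ) := by
  have hfilter : (range (n + m - 2)).filter (· < m - 1) = range (m - 1) := by
    ext i; simp only [mem_filter, mem_range]; omega
  rw [Fin.sum_univ_eq_sum_range (fun i => sylvesterRowWeight ν n m i + i)]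
  simp only [sylvesterRowWeight, sub_right_comm _ _ (ite _ _ _), sub_add_cancel]
  rw [sum_sub_distrib, sum_ite, hfilter]
  simp

theorem sylvester_exponent_le {ν n m : ℕ} (hn : 1 ≤ n) (hnν : n ≤ ν) (hm : 1 ≤ m) (hmν : m ≤ ν) :
    ((n + m - 2 : ℕ) : ℤ) * ν - (m - 1 : ℕ) * (n - 1 : ℕ) ≤ ((ν ^ 2 - 1 : ℕ) : ℤ) := by
  have hν : 1 ≤ ν ^ 2 := Nat.one_le_pow _ _ (by omega)
  push_cast [Nat.cast_sub hn, Nat.cast_sub hm, Nat.cast_sub hν, Nat.cast_sub (by omega : 2 ≤ n + m)]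
  have hn' : (n : ℤ) ≤ ν := by exact_mod_cast hnν
  have hm' : (m : ℤ) ≤ ν := by exact_mod_cast hmν
  nlinarith

theorem stmt_4_general (ν : ℕ) :
    ∃ C : ℝ, 0 < C ∧ ∀ n m : ℕ, 2 ≤ n → n ≤ ν → 2 ≤ m → m ≤ ν →
      ∀ M : ℝ, 1 ≤ M → ∀ a b : ℕ → ℤ,
        a (n - 1) ≠ 0 → b (m - 1) ≠ 0 →
        (∀ i, i ≤ ν - 1 → (|a i| : ℝ) < M ^ (ν - i)) →
        (∀ i, i ≤ ν - 1 → (|b i| : ℝ) < M ^ (ν - i)) →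
        (|(sylvesterMat n m a b).det| : ℝ) ≤ C * M ^ (ν ^ 2 - 1) := by
  refine ⟨(2 * ν)!, by positivity, ?_⟩
  intro n m hn hnν hm hmν M hM a b _ _ ha hb
  have hM₀ : 0 < M := zero_lt_one.trans_le hM
  have hdet := abs_det_le_of_abs_le_zpow _ hM₀ _ (fun j : Fin (n + m - 2) => (j : ℤ))
    (abs_sylvesterMat_le hnν hmν hM₀.le (fun i hi => (ha i hi).le) (fun i hi => (hb i hi).le))
  rw [← sum_add_distrib, sum_sylvesterRowWeight_add (by omega), Fintype.card_fin] at hdet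
  rw [Int.cast_det, ← zpow_natCast]
  calc _ ≤ _ := hdet
    _ ≤ (2 * ν)! * M ^ ((ν ^ 2 - 1 : ℕ) : ℤ) := by
      gcongr
      · omega
      · exact sylvester_exponent_le (by omega) hnν (by omega) hmν

/-- if `|a_i|, |b_i| < M^{ν-i}` and the leading coefficients are
nonzero, then `|Res(P₁,P₂)| ≤ C(ν) M^{ν²-1}`. -/
theorem stmt_4 (ν : ℕ) (hν : 2 ≤ ν) :
    ∃ C : ℝ, 0 < C ∧ ∀ n m : ℕ, 2 ≤ n → n ≤ ν → 2 ≤ m → m ≤ ν →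
      ∀ M : ℝ, 1 ≤ M → ∀ a b : ℕ → ℤ,
        a (n - 1) ≠ 0 → b (m - 1) ≠ 0 →
        (∀ i, i ≤ ν - 1 → (|a i| : ℝ) < M ^ (ν - i)) →
        (∀ i, i ≤ ν - 1 → (|b i| : ℝ) < M ^ (ν - i)) →
        (|(sylvesterMat n m a b).det| : ℝ) ≤ C * M ^ (ν ^ 2 - 1) :=
  stmt_4_general ν
end

section
/- Let $p \geq 37$ be a prime, $\kappa > 0$, and $\xi = \lfloor \sqrt{p} \rfloor$. Then any set $\mathcal{S} \subseteq \mathbb{F}_p$ of size $\#\mathcal{S} \geq 16 p^{2\kappa}$ contains pairwise disjoint subsets $\mathcal{D}_1, \ldots, \mathcal{D}_K$ and $\mathcal{E}_1, \ldots, \mathcal{E}_L$ such that: (i) each $\mathcal{D}_k$ and each $\mathcal{E}_\ell$ has cardinality at least $0.25\, p^{-\kappa} (\#\mathcal{S})^{1/2}$; (ii) each $\mathcal{D}_k$ is $\sqrt{p}/3$-spaced; (iii) each dilate $\xi \mathcal{E}_\ell$ is $\sqrt{p}/3$-spaced; and (iv) the set of elements of $\mathcal{S}$ not covered by the union of all $\mathcal{D}_k$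 and $\mathcal{E}_\ell$ has size at most $2 p^{-\kappa} \#\mathcal{S}$. -/
/-!
Cut `ZMod n = {0, …, n - 1}` into blocks of `Δ` consecutive residues and fix a threshold `t`.
A heavy block (more than `t` elements of `S`) is an `E`-piece: two of its elements differ by
some `m ∈ [1, Δ - 1]`, so when `c * (Δ - 1) ≤ n / 2` their `c`-dilates are at distance
`c * m ≥ c`. In the light blocks, the layer `m` collects the elements of a given rank inside
blocks of a given parity. Two elements of a layer lie in blocks at least two apart, hence at
distance at least `Δ` (the last blocks are dropped so that this also holds across `0`), and the
layers with more than `t` elements are the `D`-pieces. What is left lies in at most two light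
dropped blocks and in at most `2t` small layers, so it has at most `2t(t + 1)` elements. With
`ξ = ⌊√p⌋`, `Δ = ⌊ξ / 3⌋ + 1`, `c = ξ` and `t = ⌊p^{-κ} √#S / 4⌋` this is at most `2 p^{-κ} #S`.
-/

open Finset

lemma Finset.card_le_mul_card_of_fiber_subset {α β : Type*} [DecidableEq β] {s : Finset α}
    {u : Finset β} (f : α → β) (F : β → Finset α) {m : ℕ} (hf : ∀ a ∈ s, f a ∈ u)
    (hF : ∀ a ∈ s, {x ∈ s | f x = f a} ⊆ F (f a) ∧ #(F (f a)) ≤ m) : #s ≤ m * #u := by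
  refine card_le_mul_card_image_of_maps_to hf m fun b _ => ?_
  obtain h | ⟨a, ha⟩ := {x ∈ s | f x = b}.eq_empty_or_nonempty
  · simp [h]
  · obtain ⟨haS, rfl⟩ := mem_filter.1 ha
    exact (card_le_card (hF a haS).1).trans (hF a haS).2

lemma le_abs_of_le_natAbs {r : ℝ} {d : ℕ} {v : ℤ} (hr : r ≤ d) (h : d ≤ v.natAbs) :
    r ≤ (|v| : ℝ) := by
  rw [← Int.cast_abs, ← Nat.cast_natAbs]
  exact hr.trans (by exact_mod_cast h)

lemma Real.sqrt_div_three_le_nat_sqrt {n : ℕ} (hn : 1 ≤ n) :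
    √(n : ℝ) / 3 ≤ Nat.sqrt n := by
  have : (1 : ℝ) ≤ Nat.sqrt n := by exact_mod_cast Nat.sqrt_pos.2 hn
  linarith [Real.real_sqrt_lt_nat_sqrt_succ (a := n)]

lemma Real.sqrt_div_three_le_nat_sqrt_div_three_add_one (n : ℕ) :
    √(n : ℝ) / 3 ≤ (Nat.sqrt n / 3 + 1 : ℕ) := by
  have : ((Nat.sqrt n + 1 : ℕ) : ℝ) ≤ 3 * (Nat.sqrt n / 3 + 1 : ℕ) := by
    exact_mod_cast (by omega : Nat.sqrt n + 1 ≤ 3 * (Nat.sqrt n / 3 + 1))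
  push_cast at this ⊢
  linarith [Real.real_sqrt_lt_nat_sqrt_succ (a := n)]

lemma Nat.sqrt_mul_sqrt_div_three_le_half (n : ℕ) : Nat.sqrt n * (Nat.sqrt n / 3) ≤ n / 2 := by
  have := Nat.mul_le_mul_left (Nat.sqrt n) (Nat.mul_div_le (Nat.sqrt n) 3)
  rw [Nat.le_div_iff_mul_le two_pos]
  nlinarith [Nat.sqrt_le' n]

lemma two_mul_mul_add_one_le (s : ℕ) {P : ℝ} (hP₀ : 0 ≤ P) (hP₁ : P ≤ 1) :
    2 * (0.25 * P * √(s : ℝ)) * (0.25 * P * √(s : ℝ) + 1) ≤ 2 * P * s := by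
  have hs : √(s : ℝ) ≤ s := Real.sqrt_le_self_iff.2
    ((Nat.eq_zero_or_pos s).imp (by exact_mod_cast ·) (by exact_mod_cast ·))
  have hsq := Real.mul_self_sqrt (Nat.cast_nonneg (α := ℝ) s)
  calc _ = P * (P * s) / 8 + P * √(s : ℝ) / 2 := by linear_combination (P * P / 8) * hsq
    _ ≤ P * s / 8 + P * s / 2 := by
      gcongr
      exact mul_le_of_le_one_left (by positivity) hP₁
    _ ≤ 2 * P * s := by nlinarith

namespace ZMod

variable {n : ℕ} [NeZero n] {a b : ZMod n}

lemma le_natAbs_valMinAbs_sub {d : ℕ} (h₁ : a.val + d ≤ b.val)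
    (h₂ : b.val + d ≤ n + a.val) : d ≤ (b - a).valMinAbs.natAbs := by
  rw [valMinAbs_natAbs_eq_min, val_sub (by omega)]
  omega

lemma le_natAbs_valMinAbs_mul_sub {c d : ℕ} (h₁ : a.val < b.val) (h₂ : b.val ≤ a.val + d)
    (hc : c * d ≤ n / 2) : c ≤ (c * b - c * a).valMinAbs.natAbs := by
  have hcast : c * b - c * a = ((c * (b.val - a.val) : ℕ) : ZMod n) := by
    rw [← mul_sub, ← val_sub h₁.le, Nat.cast_mul, natCast_zmod_val]
  have hle : c * (b.val - a.val) ≤ n / 2 := (Nat.mul_le_mul_left c (by omega)).trans hc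
  rw [hcast, valMinAbs_natCast_of_le_half hle, Int.natAbs_natCast]
  exact Nat.le_mul_of_pos_right c (by omega)

end ZMod

namespace SpacedDecomposition

variable {n : ℕ} (S : Finset (ZMod n)) (Δ t : ℕ)

def block (x : ZMod n) : ℕ := x.val / Δ

def blockPart (j : ℕ) : Finset (ZMod n) := {x ∈ S | block Δ x = j}

def rank (x : ZMod n) : ℕ := #{y ∈ blockPart S Δ (block Δ x) | y.val < x.val}

def label (x : ZMod n) : ℕ := block Δ x % 2 + 2 * rank S Δ x

def layer (m : ℕ) : Finset (ZMod n) :=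
  {x ∈ S | #(blockPart S Δ (block Δ x)) ≤ t ∧ (block Δ x + 2) * Δ ≤ n ∧
    label S Δ x = m}

def bigLayers : Finset ℕ := {m ∈ S.image (label S Δ) | t < #(layer S Δ t m)}

def heavyBlocks : Finset ℕ := {j ∈ S.image (block Δ) | t < #(blockPart S Δ j)}

def lightTail : Finset (ZMod n) :=
  {x ∈ S | #(blockPart S Δ (block Δ x)) ≤ t ∧ n < (block Δ x + 2) * Δ}

def smallLayerPart : Finset (ZMod n) :=
  {x ∈ S | #(blockPart S Δ (block Δ x)) ≤ t ∧ (block Δ x + 2) * Δ ≤ n ∧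
    #(layer S Δ t (label S Δ x)) ≤ t}

variable {S Δ t} {x y : ZMod n}

lemma block_mul_le (x : ZMod n) : block Δ x * Δ ≤ x.val := Nat.div_mul_le_self _ _

lemma lt_block_mul_add (hΔ : 0 < Δ) (x : ZMod n) : x.val < block Δ x * Δ + Δ :=
  Nat.lt_div_mul_add hΔ

lemma rank_lt_card_blockPart (hx : x ∈ S) : rank S Δ x < #(blockPart S Δ (block Δ x)) :=
  card_lt_card (filter_ssubset.2 ⟨x, by simp [blockPart, hx], lt_irrefl _⟩)

lemma rank_lt_rank (hx : x ∈ S) (hb : block Δ x = block Δ y) (h : x.val < y.val) :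
    rank S Δ x < rank S Δ y := by
  unfold rank
  rw [hb]
  refine card_lt_card ((ssubset_iff_of_subset ?_).2 ⟨x, ?_, ?_⟩)
  · exact monotone_filter_right _ fun _ _ hz => lt_trans hz h
  · simp [blockPart, hx, hb, h]
  · simp

lemma disjoint_layer {m m' : ℕ} (h : m ≠ m') : Disjoint (layer S Δ t m) (layer S Δ t m') :=
  disjoint_filter.2 fun _ _ hm hm' => h (hm.2.2.symm.trans hm'.2.2)

lemma disjoint_blockPart {j j' : ℕ} (h : j ≠ j') :
    Disjoint (blockPart S Δ j) (blockPart S Δ j') :=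
  disjoint_filter.2 fun _ _ hj hj' => h (hj.symm.trans hj')

lemma disjoint_layer_blockPart {m j : ℕ} (hj : j ∈ heavyBlocks S Δ t) :
    Disjoint (layer S Δ t m) (blockPart S Δ j) :=
  disjoint_filter.2 fun _ _ hm hx => (mem_filter.1 hj).2.not_ge (hx ▸ hm.1)

lemma sdiff_biUnion_subset :
    S \ ((bigLayers S Δ t).biUnion (layer S Δ t) ∪
      (heavyBlocks S Δ t).biUnion (blockPart S Δ)) ⊆
      lightTail S Δ t ∪ smallLayerPart S Δ t := by
  intro x hx
  obtain ⟨hxS, hxU⟩ := mem_sdiff.1 hx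
  by_contra hAB
  apply hxU
  by_cases hheavy : t < #(blockPart S Δ (block Δ x))
  · exact mem_union_right _ (mem_biUnion.2 ⟨block Δ x,
      mem_filter.2 ⟨mem_image_of_mem _ hxS, hheavy⟩, mem_filter.2 ⟨hxS, rfl⟩⟩)
  have hadm : (block Δ x + 2) * Δ ≤ n := by
    by_contra h
    exact hAB (mem_union_left _ (mem_filter.2 ⟨hxS, by omega, by omega⟩))
  have hbig : t < #(layer S Δ t (label S Δ x)) := by
    by_contra h
    exact hAB (mem_union_right _ (mem_filter.2 ⟨hxS, by omega, hadm, by omega⟩))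
  exact mem_union_left _ (mem_biUnion.2 ⟨label S Δ x,
    mem_filter.2 ⟨mem_image_of_mem _ hxS, hbig⟩, mem_filter.2 ⟨hxS, by omega, hadm, rfl⟩⟩)

lemma card_smallLayerPart_le : #(smallLayerPart S Δ t) ≤ t * (2 * t) := by
  calc #(smallLayerPart S Δ t) ≤ t * #(range (2 * t)) := by
        refine card_le_mul_card_of_fiber_subset (label S Δ) (layer S Δ t) (fun a ha => ?_)
          fun a ha => ⟨fun x hx => ?_, (mem_filter.1 ha).2.2.2⟩
        · obtain ⟨haS, hal, -, -⟩ := mem_filter.1 ha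
          have := rank_lt_card_blockPart (Δ := Δ) haS
          have := Nat.mod_lt (block Δ a) two_pos
          rw [mem_range, label]
          omega
        · obtain ⟨hxB, hxa⟩ := mem_filter.1 hx
          obtain ⟨hxS, hxl, hxn, -⟩ := mem_filter.1 hxB
          exact mem_filter.2 ⟨hxS, hxl, hxn, hxa⟩
    _ = t * (2 * t) := by rw [card_range]

variable [NeZero n]

lemma eq_of_block_eq_of_rank_eq (hx : x ∈ S) (hy : y ∈ S) (hb : block Δ x = block Δ y)
    (hr : rank S Δ x = rank S Δ y) : x = y := by
  rcases lt_trichotomy x.val y.val with h | h | h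
  · exact absurd hr (rank_lt_rank hx hb h).ne
  · exact ZMod.val_injective n h
  · exact absurd hr (rank_lt_rank hy hb.symm h).ne'

lemma le_natAbs_valMinAbs_sub_of_block_add_two_le (hΔ : 0 < Δ)
    (hxy : block Δ x + 2 ≤ block Δ y) (hy : (block Δ y + 2) * Δ ≤ n) :
    Δ ≤ (y - x).valMinAbs.natAbs := by
  have := lt_block_mul_add hΔ x
  have := lt_block_mul_add hΔ y
  have := block_mul_le (Δ := Δ) y
  have := Nat.mul_le_mul_right Δ hxy
  simp only [add_mul] at *
  exact ZMod.le_natAbs_valMinAbs_sub (by omega) (by omega)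

lemma le_natAbs_valMinAbs_sub_of_mem_layer (hΔ : 0 < Δ) {m : ℕ} (hx : x ∈ layer S Δ t m)
    (hy : y ∈ layer S Δ t m) (hxy : x ≠ y) : Δ ≤ (x - y).valMinAbs.natAbs := by
  obtain ⟨hxS, -, hxn, hxm⟩ := mem_filter.1 hx
  obtain ⟨hyS, -, hyn, hym⟩ := mem_filter.1 hy
  unfold label at hxm hym
  have hb : block Δ x ≠ block Δ y := fun hb =>
    hxy (eq_of_block_eq_of_rank_eq hxS hyS hb (by rw [hb] at hxm; omega))
  rcases Nat.lt_or_gt_of_ne hb with h | h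
  · rw [← ZMod.natAbs_valMinAbs_neg, neg_sub]
    exact le_natAbs_valMinAbs_sub_of_block_add_two_le hΔ (by omega) hyn
  · exact le_natAbs_valMinAbs_sub_of_block_add_two_le hΔ (by omega) hxn

lemma le_natAbs_valMinAbs_mul_sub_of_block_eq (hΔ : 0 < Δ) {c : ℕ} (hc : c * (Δ - 1) ≤ n / 2)
    (hb : block Δ x = block Δ y) (hxy : x ≠ y) : c ≤ (c * x - c * y).valMinAbs.natAbs := by
  have := lt_block_mul_add hΔ x
  have := lt_block_mul_add hΔ y
  have := block_mul_le (Δ := Δ) x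
  have := block_mul_le (Δ := Δ) y
  rw [hb] at *
  rcases lt_trichotomy x.val y.val with h | h | h
  · rw [← ZMod.natAbs_valMinAbs_neg, neg_sub]
    exact ZMod.le_natAbs_valMinAbs_mul_sub h (by omega) hc
  · exact absurd (ZMod.val_injective n h) hxy
  · exact ZMod.le_natAbs_valMinAbs_mul_sub h (by omega) hc

lemma card_lightTail_le (hΔ : 0 < Δ) : #(lightTail S Δ t) ≤ t * 2 := by
  calc #(lightTail S Δ t) ≤ t * #(Icc (n / Δ - 1) (n / Δ)) := by
        refine card_le_mul_card_of_fiber_subset (block Δ) (blockPart S Δ) (fun a ha => ?_)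
          fun a ha => ⟨fun x hx => ?_, (mem_filter.1 ha).2.1⟩
        · have hle : block Δ a ≤ n / Δ := Nat.div_le_div_right (ZMod.val_lt a).le
          have hlt := (Nat.div_lt_iff_lt_mul hΔ).2 (mem_filter.1 ha).2.2
          exact mem_Icc.2 ⟨by omega, hle⟩
        · obtain ⟨hxT, hxa⟩ := mem_filter.1 hx
          exact mem_filter.2 ⟨(mem_filter.1 hxT).1, hxa⟩
    _ ≤ t * 2 := Nat.mul_le_mul_left t (by rw [Nat.card_Icc]; omega)

lemma card_sdiff_biUnion_le (hΔ : 0 < Δ) :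
    #(S \ ((bigLayers S Δ t).biUnion (layer S Δ t) ∪
      (heavyBlocks S Δ t).biUnion (blockPart S Δ)))
      ≤ 2 * t * (t + 1) :=
  calc _ ≤ #(lightTail S Δ t ∪ smallLayerPart S Δ t) := card_le_card sdiff_biUnion_subset
    _ ≤ #(lightTail S Δ t) + #(smallLayerPart S Δ t) := card_union_le _ _
    _ ≤ t * 2 + t * (2 * t) := add_le_add (card_lightTail_le hΔ) card_smallLayerPart_le
    _ = 2 * t * (t + 1) := by ring

end SpacedDecomposition

open SpacedDecomposition in
theorem stmt_7_general (p : ℕ) [Fact p.Prime] (κ : ℝ) (hκ : 0 < κ)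
    (S : Finset (ZMod p)) :
    ∃ (K L : ℕ) (D : Fin K → Finset (ZMod p)) (E : Fin L → Finset (ZMod p)),
      (∀ k, D k ⊆ S) ∧ (∀ l, E l ⊆ S) ∧
      (∀ k k', k ≠ k' → Disjoint (D k) (D k')) ∧
      (∀ l l', l ≠ l' → Disjoint (E l) (E l')) ∧
      (∀ k l, Disjoint (D k) (E l)) ∧
      (∀ k, 0.25 * (p : ℝ) ^ (-κ) * Real.sqrt (S.card : ℝ) ≤ ((D k).card : ℝ)) ∧
      (∀ l, 0.25 * (p : ℝ) ^ (-κ) * Real.sqrt (S.card : ℝ) ≤ ((E l).card : ℝ)) ∧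
      (∀ k, ∀ d₁ ∈ D k, ∀ d₂ ∈ D k, d₁ ≠ d₂ →
        Real.sqrt p / 3 ≤ (|(d₁ - d₂).valMinAbs| : ℝ)) ∧
      (∀ l, ∀ e₁ ∈ E l, ∀ e₂ ∈ E l, e₁ ≠ e₂ →
        Real.sqrt p / 3 ≤
          (|(((Nat.sqrt p : ZMod p)) * e₁ - ((Nat.sqrt p : ZMod p)) * e₂).valMinAbs| : ℝ)) ∧
      (((S \ ((Finset.univ.biUnion D) ∪ (Finset.univ.biUnion E))).card : ℝ)
        ≤ 2 * (p : ℝ) ^ (-κ) * (S.card : ℝ)) := by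
  set Δ := Nat.sqrt p / 3 + 1
  set P := (p : ℝ) ^ (-κ)
  set T := 0.25 * P * √(#S : ℝ)
  set t := ⌊T⌋₊
  set I := bigLayers S Δ t
  set J := heavyBlocks S Δ t
  have hp : 1 ≤ p := (Fact.out : p.Prime).one_lt.le
  have hP₁ : P ≤ 1 := Real.rpow_le_one_of_one_le_of_nonpos (by exact_mod_cast hp) (by linarith)
  have hT : 0 ≤ T := by positivity
  refine ⟨#I, #J, fun k => layer S Δ t (I.orderEmbOfFin rfl k),
    fun l => blockPart S Δ (J.orderEmbOfFin rfl l), fun _ => filter_subset _ _,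
    fun _ => filter_subset _ _, fun k k' h => disjoint_layer ((I.orderEmbOfFin rfl).injective.ne h),
    fun l l' h => disjoint_blockPart ((J.orderEmbOfFin rfl).injective.ne h),
    fun k l => disjoint_layer_blockPart (J.orderEmbOfFin_mem rfl l),
    fun k => ((Nat.floor_lt hT).1 (mem_filter.1 (I.orderEmbOfFin_mem rfl k)).2).le,
    fun l => ((Nat.floor_lt hT).1 (mem_filter.1 (J.orderEmbOfFin_mem rfl l)).2).le,
    fun k x hx y hy hxy => le_abs_of_le_natAbs (Real.sqrt_div_three_le_nat_sqrt_div_three_add_one p)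
      (le_natAbs_valMinAbs_sub_of_mem_layer (Nat.succ_pos _) hx hy hxy),
    fun l x hx y hy hxy => le_abs_of_le_natAbs (Real.sqrt_div_three_le_nat_sqrt hp)
      (le_natAbs_valMinAbs_mul_sub_of_block_eq (Nat.succ_pos _)
        (Nat.sqrt_mul_sqrt_div_three_le_half p)
        ((mem_filter.1 hx).2.trans (mem_filter.1 hy).2.symm) hxy), ?_⟩
  rw [← image_biUnion (f := I.orderEmbOfFin rfl), ← image_biUnion (f := J.orderEmbOfFin rfl),
    image_orderEmbOfFin_univ, image_orderEmbOfFin_univ]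
  calc _ ≤ ((2 * t * (t + 1) : ℕ) : ℝ) := mod_cast card_sdiff_biUnion_le (Nat.succ_pos _)
    _ ≤ 2 * T * (T + 1) := by push_cast; gcongr <;> exact Nat.floor_le hT
    _ ≤ 2 * P * #S := two_mul_mul_add_one_le _ (by positivity) hP₁

/-- decomposition of an arbitrary set `S ⊆ 𝔽_p` into large
`√p/3`-spaced pieces `D_k` and pieces `E_ℓ` whose dilates `ξE_ℓ` (with
`ξ = ⌊√p⌋`) are `√p/3`-spaced, covering all but `2p^{-κ}·#S` elements. -/
theorem stmt_7 (p : ℕ) [Fact p.Prime] (hp : 37 ≤ p) (κ : ℝ) (hκ : 0 < κ)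
    (S : Finset (ZMod p)) (hS : 16 * (p : ℝ) ^ (2 * κ) ≤ (S.card : ℝ)) :
    ∃ (K L : ℕ) (D : Fin K → Finset (ZMod p)) (E : Fin L → Finset (ZMod p)),
      (∀ k, D k ⊆ S) ∧ (∀ l, E l ⊆ S) ∧
      (∀ k k', k ≠ k' → Disjoint (D k) (D k')) ∧
      (∀ l l', l ≠ l' → Disjoint (E l) (E l')) ∧
      (∀ k l, Disjoint (D k) (E l)) ∧
      (∀ k, 0.25 * (p : ℝ) ^ (-κ) * Real.sqrt (S.card : ℝ) ≤ ((D k).card : ℝ)) ∧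
      (∀ l, 0.25 * (p : ℝ) ^ (-κ) * Real.sqrt (S.card : ℝ) ≤ ((E l).card : ℝ)) ∧
      (∀ k, ∀ d₁ ∈ D k, ∀ d₂ ∈ D k, d₁ ≠ d₂ →
        Real.sqrt p / 3 ≤ (|(d₁ - d₂).valMinAbs| : ℝ)) ∧
      (∀ l, ∀ e₁ ∈ E l, ∀ e₂ ∈ E l, e₁ ≠ e₂ →
        Real.sqrt p / 3 ≤
          (|(((Nat.sqrt p : ZMod p)) * e₁ - ((Nat.sqrt p : ZMod p)) * e₂).valMinAbs| : ℝ)) ∧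
      (((S \ ((Finset.univ.biUnion D) ∪ (Finset.univ.biUnion E))).card : ℝ)
        ≤ 2 * (p : ℝ) ^ (-κ) * (S.card : ℝ)) :=
  stmt_7_general p κ hκ S
end

section
/- Let $p \geq 37$. Set $U = \sqrt{p}/3$ and $\xi = \lfloor \sqrt{p} \rfloor$. If $\mathcal{I} \subseteq \mathbb{F}_p$ is the image of an integer interval $[-\lfloor U \rfloor, \lfloor U \rfloor]$, then the dilated set $\xi \mathcal{I} = \{\xi x : x \in \mathcal{I}\}$ is $U$-spaced: any two distinct elements $y_1, y_2 \in \xi\mathcal{I}$ satisfy $|y_1 - y_2| \geq U$, where $|y|$ denotes the minimal absolute value of an integer representative of $y$ modulo $p$. -/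
/-!
Write `ξ = ⌊√p⌋` and `d = z₁ - z₂`, so that `ξ z₁ - ξ z₂` is the class of the integer `ξ d`.
An integer `a` and any representative of its class mod `p` either coincide or differ by at
least `p`, so every representative has absolute value at least `min |a| (p - |a|)`.
For `a = ξ d` with `1 ≤ |d| ≤ 2√p/3` both terms are at least `√p/3`: the first because
`ξ > √p - 1`, the second because `ξ |d| ≤ √p · 2√p/3 = 2p/3`.
-/

theorem Int.min_abs_le_abs_of_modEq {n a b : ℤ} (h : a ≡ b [ZMOD n]) :
    min |b| (|n| - |b|) ≤ |a| := by
  by_cases hab : a = b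
  · rw [hab]
    exact min_le_left _ _
  have hdvd : |n| ∣ |b - a| := (abs_dvd_abs _ _).mpr h.dvd
  have hn : |n| ≤ |b - a| := Int.le_of_dvd (abs_pos.mpr (sub_ne_zero.mpr (Ne.symm hab))) hdvd
  have hba : |b - a| ≤ |b| + |a| := abs_sub _ _
  linarith [min_le_right |b| (|n| - |b|)]

theorem ZMod.min_abs_le_abs_valMinAbs {n : ℕ} (a : ℤ) :
    min |a| (n - |a|) ≤ |(a : ZMod n).valMinAbs| := by
  have h := Int.min_abs_le_abs_of_modEq
    ((ZMod.intCast_eq_intCast_iff _ a n).mp (ZMod.coe_valMinAbs (a : ZMod n)))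
  rwa [Nat.abs_cast] at h

section DilatedInterval

variable {p : ℕ} {d : ℤ}

theorem three_le_sqrt_of_abs_le (hd0 : d ≠ 0) (hd : |d| ≤ 2 * ⌊√(p : ℝ) / 3⌋) :
    3 ≤ √(p : ℝ) := by
  have hfloor : (1 : ℤ) ≤ ⌊√(p : ℝ) / 3⌋ := by
    have := Int.one_le_abs hd0
    omega
  have := Int.le_floor.mp hfloor
  push_cast at this
  linarith

theorem abs_le_two_mul_sqrt_div_three (hd : |d| ≤ 2 * ⌊√(p : ℝ) / 3⌋) :
    |(d : ℝ)| ≤ 2 * (√(p : ℝ) / 3) := by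
  have hd' : ((|d| : ℤ) : ℝ) ≤ ((2 * ⌊√(p : ℝ) / 3⌋ : ℤ) : ℝ) := by exact_mod_cast hd
  push_cast at hd'
  linarith [Int.floor_le (√(p : ℝ) / 3)]

theorem sqrt_div_three_le_natSqrt_mul_abs (hd0 : d ≠ 0) (hd : |d| ≤ 2 * ⌊√(p : ℝ) / 3⌋) :
    √(p : ℝ) / 3 ≤ Nat.sqrt p * |(d : ℝ)| := by
  have hs := three_le_sqrt_of_abs_le hd0 hd
  have hξ : √(p : ℝ) < Nat.sqrt p + 1 := Real.real_sqrt_lt_nat_sqrt_succ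
  have hd1 : (1 : ℝ) ≤ |(d : ℝ)| := by exact_mod_cast Int.one_le_abs hd0
  nlinarith

theorem sqrt_div_three_le_sub_natSqrt_mul_abs (hd0 : d ≠ 0) (hd : |d| ≤ 2 * ⌊√(p : ℝ) / 3⌋) :
    √(p : ℝ) / 3 ≤ p - Nat.sqrt p * |(d : ℝ)| := by
  have hs := three_le_sqrt_of_abs_le hd0 hd
  have hsq : √(p : ℝ) * √(p : ℝ) = p := Real.mul_self_sqrt (Nat.cast_nonneg p)
  have hξ : (Nat.sqrt p : ℝ) ≤ √(p : ℝ) := Real.nat_sqrt_le_real_sqrt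
  have hdle := abs_le_two_mul_sqrt_div_three hd
  have : (Nat.sqrt p : ℝ) * |(d : ℝ)| ≤ 2 * p / 3 := by
    calc (Nat.sqrt p : ℝ) * |(d : ℝ)| ≤ √(p : ℝ) * (2 * (√(p : ℝ) / 3)) :=
          mul_le_mul hξ hdle (abs_nonneg _) (Real.sqrt_nonneg _)
      _ = 2 * p / 3 := by linear_combination (2 / 3) * hsq
  nlinarith

end DilatedInterval

theorem stmt_8_general (p : ℕ) :
    ∀ z₁ z₂ : ℤ, |z₁| ≤ ⌊Real.sqrt p / 3⌋ → |z₂| ≤ ⌊Real.sqrt p / 3⌋ →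
      ((Nat.sqrt p : ZMod p)) * (z₁ : ZMod p) ≠ ((Nat.sqrt p : ZMod p)) * (z₂ : ZMod p) →
      Real.sqrt p / 3 ≤
        (|(((Nat.sqrt p : ZMod p)) * (z₁ : ZMod p)
            - ((Nat.sqrt p : ZMod p)) * (z₂ : ZMod p)).valMinAbs| : ℝ) := by
  intro z₁ z₂ h₁ h₂ hne
  have hd0 : z₁ - z₂ ≠ 0 := fun h => hne (by rw [sub_eq_zero.mp h])
  have hd : |z₁ - z₂| ≤ 2 * ⌊√(p : ℝ) / 3⌋ := (abs_sub _ _).trans (by omega)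
  have hcast : (Nat.sqrt p : ZMod p) * z₁ - (Nat.sqrt p : ZMod p) * z₂
      = ((Nat.sqrt p * (z₁ - z₂) : ℤ) : ZMod p) := by push_cast; ring
  have hrep := ZMod.min_abs_le_abs_valMinAbs (n := p) (Nat.sqrt p * (z₁ - z₂))
  rw [hcast]
  calc √(p : ℝ) / 3
      ≤ min (Nat.sqrt p * |((z₁ - z₂ : ℤ) : ℝ)|) (p - Nat.sqrt p * |((z₁ - z₂ : ℤ) : ℝ)|) :=
        le_min (sqrt_div_three_le_natSqrt_mul_abs hd0 hd)
          (sqrt_div_three_le_sub_natSqrt_mul_abs hd0 hd)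
    _ ≤ _ := by
        rw [abs_mul, Nat.abs_cast] at hrep
        exact_mod_cast hrep

/-- for `p ≥ 37`, `U = √p/3` and `ξ = ⌊√p⌋`, the dilate by `ξ` of the
interval `[-⌊U⌋, ⌊U⌋] ⊆ 𝔽_p` is `U`-spaced. -/
theorem stmt_8 (p : ℕ) [Fact p.Prime] (hp : 37 ≤ p) :
    ∀ z₁ z₂ : ℤ, |z₁| ≤ ⌊Real.sqrt p / 3⌋ → |z₂| ≤ ⌊Real.sqrt p / 3⌋ →
      ((Nat.sqrt p : ZMod p)) * (z₁ : ZMod p) ≠ ((Nat.sqrt p : ZMod p)) * (z₂ : ZMod p) →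
      Real.sqrt p / 3 ≤
        (|(((Nat.sqrt p : ZMod p)) * (z₁ : ZMod p)
            - ((Nat.sqrt p : ZMod p)) * (z₂ : ZMod p)).valMinAbs| : ℝ) :=
  stmt_8_general p
end

section
/- Let $P, Q \in \mathbb{Z}[Z]$ be nonzero univariate integer polynomials with $Q \mid P$ in $\mathbb{Z}[Z]$. If all coefficients of $P$ have absolute value at most $e^H$ with $H \geq 1$, then all coefficients of $Q$ have absolute value at most $e^{H + C}$, where $C$ is a constant depending only on $\deg P$. -/
/-!
Write `P = Q * R`. The Mahler measure is multiplicative and is at least `1` for a nonzero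
integer polynomial (its leading coefficient is a nonzero integer), so `M(Q) ≤ M(P)`.
Each coefficient of `Q` is bounded by a binomial coefficient times `M(Q)`, and Landau's inequality
bounds `M(P)` by `√(deg P + 1)` times the largest coefficient of `P`.
-/

namespace Polynomial

lemma supNorm_le_of_forall_norm_coeff_le {A : Type*} [NormedRing A] {p : A[X]} {B : ℝ}
    (h : ∀ i, ‖p.coeff i‖ ≤ B) : p.supNorm ≤ B := by
  obtain ⟨i, hi⟩ := p.exists_eq_supNorm
  exact hi ▸ h i

lemma mahlerMeasure_map_intCast_le {P : ℤ[X]} {B : ℝ} (h : ∀ i, (|P.coeff i| : ℝ) ≤ B) :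
    (P.map (Int.castRingHom ℂ)).mahlerMeasure ≤ √(P.natDegree + 1) * B := by
  set f := P.map (Int.castRingHom ℂ)
  have hdeg : f.natDegree = P.natDegree :=
    natDegree_map_eq_of_injective (Int.castRingHom ℂ).injective_int _
  refine f.mahlerMeasure_le_sqrt_natDegree_add_one_mul_supNorm.trans ?_
  rw [hdeg]
  gcongr
  exact supNorm_le_of_forall_norm_coeff_le fun i => by simpa [f] using h i

lemma abs_coeff_le_two_pow_mul_mahlerMeasure_of_dvd {P Q : ℤ[X]} (hP : P ≠ 0) (hQP : Q ∣ P)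
    (i : ℕ) :
    (|Q.coeff i| : ℝ) ≤ 2 ^ P.natDegree * (P.map (Int.castRingHom ℂ)).mahlerMeasure := by
  obtain ⟨R, rfl⟩ := hQP
  have hR : R ≠ 0 := right_ne_zero_of_mul hP
  have hQ : Q.natDegree ≤ (Q * R).natDegree := natDegree_le_of_dvd (dvd_mul_right Q R) hP
  calc (|Q.coeff i| : ℝ) = ‖(Q.map (Int.castRingHom ℂ)).coeff i‖ := by simp
    _ ≤ Q.natDegree.choose i *
          (Q.map (Int.castRingHom ℂ) * R.map (Int.castRingHom ℂ)).mahlerMeasure := by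
      rw [← natDegree_map_eq_of_injective (Int.castRingHom ℂ).injective_int Q]
      exact norm_coeff_le_choose_mul_mahlerMeasure_of_one_le_mahlerMeasure i _ _
        (one_le_mahlerMeasure_of_ne_zero hR)
    _ ≤ 2 ^ (Q * R).natDegree * ((Q * R).map (Int.castRingHom ℂ)).mahlerMeasure := by
      rw [Polynomial.map_mul]
      gcongr
      · exact mahlerMeasure_nonneg _
      · exact_mod_cast (Nat.choose_le_two_pow _ _).trans (Nat.pow_le_pow_right two_pos hQ)

end Polynomial

/-- a divisor `Q` of an integer polynomial `P` of logarithmic height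
at most `H` has logarithmic height at most `H + C(deg P)`. -/
theorem stmt_10 :
    ∃ C : ℕ → ℝ, ∀ (P Q : Polynomial ℤ) (H : ℝ), 1 ≤ H →
      P ≠ 0 → Q ≠ 0 → Q ∣ P →
      (∀ i : ℕ, (|P.coeff i| : ℝ) ≤ Real.exp H) →
      ∀ i : ℕ, (|Q.coeff i| : ℝ) ≤ Real.exp (H + C P.natDegree) := by
  refine ⟨fun n => Real.log (2 ^ n * √(n + 1)), fun P Q H _ hP _ hQP hPH i => ?_⟩
  calc (|Q.coeff i| : ℝ) ≤ 2 ^ P.natDegree * (P.map (Int.castRingHom ℂ)).mahlerMeasure :=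
        Polynomial.abs_coeff_le_two_pow_mul_mahlerMeasure_of_dvd hP hQP i
    _ ≤ 2 ^ P.natDegree * (√(P.natDegree + 1) * Real.exp H) := by
        gcongr
        exact Polynomial.mahlerMeasure_map_intCast_le hPH
    _ = Real.exp (H + Real.log (2 ^ P.natDegree * √(P.natDegree + 1))) := by
        rw [Real.exp_add, Real.exp_log (by positivity)]
        ring
end
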